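/- For every ω ∈ 𝒯, λ, h ≥ 0, b > 0 and every μ ∈ 𝒫 with Σ_x x μ(x) = Σ_{α,β,x} x μ_b^{λ,h}(α,β,x), one has Q(μ) ≤ Q(μ_b^{λ,h}), and equality holds if and only if μ = μ_b^{λ,h}. -/

import Mathlib

open Filter Topology
open scoped BigOperators ENNReal

noncomputable section
namespace Copoly

/-- The number of elements of a finite type satisfying a predicate. -/
def cardOf {α : Type*} [Fintype α] (P : α → Prop) : ℕ :=
  (@Finset.filter _ P (Classical.decPred P) Finset.univ).card

/-- A single step of the simple random walk. -/
def step (b : Bool) : ℤ := if b then 1 else -1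

/-- The simple random walk path built from the increments `y`. -/
def walk (y : ℕ → Bool) (x : ℕ) : ℤ := ∑ i ∈ Finset.range x, step (y i)

/-- `sign (S x)`, with the convention `sign (S x) = sign (S (x-1))` when `S x = 0`. -/
def wsign (y : ℕ → Bool) : ℕ → ℤ
  | 0 => 1
  | x + 1 => if walk y (x + 1) = 0 then wsign y x else Int.sign (walk y (x + 1))

/-- Extension of a finite tuple of increments by `false`. -/
def ext {N : ℕ} (y : Fin N → Bool) : ℕ → Bool :=
  fun i => if h : i < N then y ⟨i, h⟩ else false

/-- The partition function `Z_{N,ω,λ,h} = E[exp (λ ∑_{x=1}^N (ω_x + h) sign (S_x))]`,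
written as the exact average over the `2^N` equally likely increment strings. -/
def Zpart (ω : ℕ → ℤ) (lam h : ℝ) (N : ℕ) : ℝ :=
  (1 / 2 : ℝ) ^ N * ∑ y : Fin N → Bool,
    Real.exp (lam * ∑ x ∈ Finset.Icc 1 N, ((ω x : ℝ) + h) * (wsign (ext y) x : ℝ))

/-- `ω` is centered and `2T`-periodic with `T ≥ 1`. -/
def IsPeriod (ω : ℕ → ℤ) (T : ℕ) : Prop :=
  0 < T ∧ (∀ x, ω (x + 2 * T) = ω x) ∧ ∑ x ∈ Finset.Icc 1 (2 * T), ω x = 0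

/-- The class `𝒯` of nontrivial centered periodic sequences with values in `{-1,1}`. -/
def memT (ω : ℕ → ℤ) : Prop :=
  (∀ x, ω x = 1 ∨ ω x = -1) ∧ (∃ T, IsPeriod ω T) ∧
    ¬ (∀ k : ℕ, 1 ≤ k → ω (2 * k - 1) * ω (2 * k) = -1)

/-- `T_ω`, the smallest (half-)period of `ω`. -/
def Tper (ω : ℕ → ℤ) : ℕ := sInf {T | IsPeriod ω T}

/-- The free energy `f_ω(λ,h)` (the limit defining it exists). -/
def freeEnergy (ω : ℕ → ℤ) (lam h : ℝ) : ℝ :=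
  limUnder atTop fun N : ℕ => Real.log (Zpart ω lam h N) / N

/-- `φ_ω(λ,h) = f_ω(λ,h) - λ h`. -/
def phiFE (ω : ℕ → ℤ) (lam h : ℝ) : ℝ := freeEnergy ω lam h - lam * h

/-- `ξ_{α,β} = ∑_{x=2a+1}^{2b} ω_x` for representatives `a ∈ α`, `b ∈ β` with `a < b`. -/
def xiM (T : ℕ) (ω : ℕ → ℤ) (α β : ZMod T) : ℤ :=
  ∑ x ∈ Finset.Icc (2 * α.val + 1)
      (2 * (if α.val < β.val then β.val else β.val + T)), ω x

/-- `K(x) = P(η = x)`, the law of the first return time to `0` of the walk. -/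
def Kret (x : ℕ) : ℝ :=
  if x = 0 then 0 else
    (1 / 2 : ℝ) ^ x * (cardOf fun y : Fin x → Bool =>
      walk (ext y) x = 0 ∧ ∀ z, 0 < z → z < x → walk (ext y) z ≠ 0 : ℕ)

/-- `p_{α,β} = P(η/2 ∈ β - α)`. -/
def pmat (T : ℕ) (α β : ZMod T) : ℝ :=
  ∑' n : ℕ, if (n : ZMod T) = β - α then Kret (2 * n) else 0

/-- `K_{α,β}(x) = P(η = x | η/2 ∈ β - α)`. -/
def Kcond (T : ℕ) (α β : ZMod T) (x : ℕ) : ℝ :=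
  if x % 2 = 0 ∧ ((x / 2 : ℕ) : ZMod T) = β - α then Kret x / pmat T α β else 0

/-- `Φ^{λ,h}_{α,β}(x) = log ((1 + exp (-2(λ ξ_{α,β} + λ h x)))/2)`. -/
def PhiM (T : ℕ) (ω : ℕ → ℤ) (lam h : ℝ) (α β : ZMod T) (x : ℕ) : ℝ :=
  Real.log ((1 + Real.exp (-2 * (lam * (xiM T ω α β : ℝ) + lam * h * x))) / 2)

/-- The matrix `A_{α,β}(b,λ,h)`. -/
def Amat (T : ℕ) (ω : ℕ → ℤ) (b lam h : ℝ) (α β : ZMod T) : ℝ :=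
  pmat T α β * ∑' x : ℕ, Kcond T α β x * Real.exp (PhiM T ω lam h α β x - b * x)

/-- The Perron–Frobenius eigenvalue of a matrix with positive entries: the unique
eigenvalue admitting a strictly positive eigenvector. -/
def PFeig {T : ℕ} (A : ZMod T → ZMod T → ℝ) : ℝ :=
  sSup {r : ℝ | ∃ v : ZMod T → ℝ, (∀ i, 0 < v i) ∧ ∀ i, (∑' j : ZMod T, A i j * v j) = r * v i}

/-- `Z(b,λ,h)`, the Perron–Frobenius eigenvalue of `A(b,λ,h)`. -/
def Zeig (T : ℕ) (ω : ℕ → ℤ) (b lam h : ℝ) : ℝ := PFeig (Amat T ω b lam h)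

open Classical in
/-- `b̃(λ,h)`: the unique `b > 0` solving `Z(b,λ,h) = 1` if it exists, and `0` otherwise. -/
def btilde (T : ℕ) (ω : ℕ → ℤ) (lam h : ℝ) : ℝ :=
  if hb : ∃ b > 0, Zeig T ω b lam h = 1 then hb.choose else 0

/-- The state space `𝕊 × 𝕊 × 2ℕ` (the last coordinate records the even excursion length). -/
abbrev Sp (T : ℕ) := ZMod T × ZMod T × ℕ

/-- First `𝕊`-marginal of `μ`. -/
def marg1 {T : ℕ} (μ : Sp T → ℝ) (α : ZMod T) : ℝ := ∑' q : ZMod T × ℕ, μ (α, q.1, q.2)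

/-- Second `𝕊`-marginal of `μ`. -/
def marg2 {T : ℕ} (μ : Sp T → ℝ) (β : ZMod T) : ℝ := ∑' q : ZMod T × ℕ, μ (q.1, β, q.2)

/-- The set `𝒫`: probability measures on `𝕊 × 𝕊 × 2ℕ` with equal `𝕊`-marginals,
supported on `{(α,β,x) : x ∈ 2ℕ, x/2 ∈ β - α}`. -/
def memP {T : ℕ} (μ : Sp T → ℝ) : Prop :=
  (∀ p, 0 ≤ μ p) ∧ HasSum μ 1 ∧
    (∀ p : Sp T, μ p ≠ 0 →
      p.2.2 % 2 = 0 ∧ 2 ≤ p.2.2 ∧ ((p.2.2 / 2 : ℕ) : ZMod T) = p.2.1 - p.1) ∧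
    ∀ γ, marg1 μ γ = marg2 μ γ

/-- The nonnegative summand `a log (a/c) - a + c` of relative entropy. -/
def klF (a c : ℝ) : ℝ := a * Real.log (a / c) - a + c

/-- Relative entropy `H(μ | ν) ∈ [0,∞]` of two probability measures on a countable space. -/
def Dkl {T : ℕ} (μ ν : Sp T → ℝ) : ℝ≥0∞ := ∑' p : Sp T, ENNReal.ofReal (klF (μ p) (ν p))

/-- The rate functional `I(μ) = ∑ μ(α,β,x) log (μ(α,β,x)/(μ(α) p_{α,β} K_{α,β}(x))) ∈ [0,∞]`. -/
def Ifun (T : ℕ) (μ : Sp T → ℝ) : ℝ≥0∞ :=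
  ∑' p : Sp T,
    ENNReal.ofReal (klF (μ p) (marg1 μ p.1 * pmat T p.1 p.2.1 * Kcond T p.1 p.2.1 p.2.2))

/-- `Q(μ) = ∑ Φ^{λ,h}_{α,β}(x) μ(α,β,x) - I(μ)`, with values in `[-∞,∞)`. -/
def Qfun (T : ℕ) (ω : ℕ → ℤ) (lam h : ℝ) (μ : Sp T → ℝ) : EReal :=
  ((∑' p : Sp T, PhiM T ω lam h p.1 p.2.1 p.2.2 * μ p : ℝ) : EReal) - (Ifun T μ : EReal)

/-- The measure `μ_b^{λ,h}(α,β,x) = π(α) p_{α,β} K_{α,β}(x) exp(Φ(x) - bx) v_β/(Z v_α)`. -/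
def muB (T : ℕ) (ω : ℕ → ℤ) (b lam h : ℝ) (π v : ZMod T → ℝ) (p : Sp T) : ℝ :=
  π p.1 * pmat T p.1 p.2.1 * Kcond T p.1 p.2.1 p.2.2 *
      Real.exp (PhiM T ω lam h p.1 p.2.1 p.2.2 - b * p.2.2) * v p.2.1 /
    (Zeig T ω b lam h * v p.1)

/-- `v` is a strictly positive right Perron–Frobenius eigenvector of `A(b,λ,h)` and `π` is
the probability left eigenvector (with eigenvalue 1) of the associated stochastic matrix
`(A_{α,β} v_β / (Z v_α))`. -/
def IsPF (T : ℕ) (ω : ℕ → ℤ) (b lam h : ℝ) (π v : ZMod T → ℝ) : Prop :=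
  (∀ i, 0 < v i) ∧
    (∀ i, (∑' j : ZMod T, Amat T ω b lam h i j * v j) = Zeig T ω b lam h * v i) ∧
    (∀ i, 0 ≤ π i) ∧ (∑' i : ZMod T, π i) = 1 ∧
    ∀ j, (∑' i : ZMod T, π i * (Amat T ω b lam h i j * v j / (Zeig T ω b lam h * v i))) = π j

/-- `H̃(μ | ν)`: the difference of relative entropies
`H(μ | ν) - H(μ_1 | ν_1)`, with values in `[-∞,∞]`. -/
def Htil {T : ℕ} (μ ν : Sp T → ℝ) : EReal :=
  (Dkl μ ν : EReal) - ((∑' α : ZMod T, klF (marg1 μ α) (marg1 ν α) : ℝ) : EReal)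

open Classical in
/-- `f(b) = ∑_{α,β,x} x μ_b^{λ,h}(α,β,x)` (defined through a choice of the
Perron–Frobenius data, on which it does not depend). -/
def fmean (T : ℕ) (ω : ℕ → ℤ) (b lam h : ℝ) : ℝ :=
  if hpf : ∃ w : (ZMod T → ℝ) × (ZMod T → ℝ), IsPF T ω b lam h w.1 w.2 then
    ∑' p : Sp T, (p.2.2 : ℝ) * muB T ω b lam h hpf.choose.1 hpf.choose.2 p
  else 0

/-- `Φ̂_{α,β}(x)` from the large-`λ` asymptotics. -/
def PhiHat (T : ℕ) (ω : ℕ → ℤ) (M : ℝ) (α β : ZMod T) (x : ℕ) : ℝ :=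
  -Real.log 2 +
    (if xiM T ω α β = -(x : ℤ) then Real.log (1 + Real.exp (2 * M * x)) else 0)

/-- `Ẑ(M)`, the Perron–Frobenius eigenvalue of `(p_{α,β} ∑_x K_{α,β}(x) exp (Φ̂_{α,β}(x)))`. -/
def Zhat (T : ℕ) (ω : ℕ → ℤ) (M : ℝ) : ℝ :=
  PFeig fun α β : ZMod T => pmat T α β * ∑' x : ℕ, Kcond T α β x * Real.exp (PhiHat T ω M α β x)

/-- The successive return times to `0` of the walk (`sInf ∅ = 0` on the irrelevant
event that the walk does not return). -/
def eta : ℕ → (ℕ → Bool) → ℕ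
  | 0, _ => 0
  | k + 1, y => sInf {x | eta k y < x ∧ walk y x = 0}

/-- Probability measures on `𝕊 × 𝕊 × 2ℕ`, with the topology of weak convergence
(= pointwise convergence on a countable discrete space). -/
abbrev PM (T : ℕ) := {μ : Sp T → ℝ // (∀ p, 0 ≤ μ p) ∧ HasSum μ 1}

/-- The empirical measure `L_m` of `{(α_j, β_j, Δη_j)}_{j<m}` along the path `y`. -/
def LmFun (T : ℕ) (m : ℕ) (y : ℕ → Bool) (p : Sp T) : ℝ :=
  (cardOf fun j : Fin m =>
      ((eta j.val y / 2 : ℕ) : ZMod T) = p.1 ∧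
        ((eta (j.val + 1) y / 2 : ℕ) : ZMod T) = p.2.1 ∧
        eta (j.val + 1) y - eta j.val y = p.2.2 : ℕ) / (m : ℝ)

open Classical in
/-- `P(L_m ∈ A)`: the probability that the `m`-th return to `0` occurs (at some time `n`)
and the empirical measure `L_m` belongs to `A`, written via cylinder sets. -/
def Pevent (T : ℕ) (A : Set (PM T)) (m : ℕ) : ℝ :=
  ∑' n : ℕ, (1 / 2 : ℝ) ^ n *
    (cardOf fun y : Fin n → Bool =>
      eta m (ext y) = n ∧ (∀ j, j < m → eta j (ext y) < eta (j + 1) (ext y)) ∧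
        ∃ hpm : (∀ p, 0 ≤ LmFun T m (ext y) p) ∧ HasSum (LmFun T m (ext y)) 1,
          (⟨LmFun T m (ext y), hpm⟩ : PM T) ∈ A : ℕ)

open Classical in
/-- The rate functional on probability measures: `I(μ)` if `μ ∈ 𝒫` and `+∞` otherwise. -/
def IfullPM {T : ℕ} (μ : PM T) : ℝ≥0∞ := if memP μ.1 then Ifun T μ.1 else ⊤

open Classical in
/-- `log` with values in `[-∞,∞)`: `elog r = -∞` for `r ≤ 0`. -/
def elog (r : ℝ) : EReal := if r ≤ 0 then ⊥ else ((Real.log r : ℝ) : EReal)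

/-- The space `(𝕊 × 2ℕ) × (𝕊 × 2ℕ)`. -/
abbrev W (T : ℕ) := (ZMod T × ℕ) × (ZMod T × ℕ)

/-- The transition kernel `q((α,x),(α',x')) = p_{α,α'} K_{α,α'}(x')`. -/
def qker (T : ℕ) (w w' : ZMod T × ℕ) : ℝ := pmat T w.1 w'.1 * Kcond T w.1 w'.1 w'.2

/-- First marginal of a measure on `(𝕊 × 2ℕ)²`. -/
def nu1 {T : ℕ} (ν : W T → ℝ) (w : ZMod T × ℕ) : ℝ := ∑' w' : ZMod T × ℕ, ν (w, w')

/-- Second marginal of a measure on `(𝕊 × 2ℕ)²`. -/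
def nu2 {T : ℕ} (ν : W T → ℝ) (w : ZMod T × ℕ) : ℝ := ∑' w' : ZMod T × ℕ, ν (w', w)

/-- `ν̂(α,β,x) = ∑_z ν(α,z,β,x)`. -/
def nuHat {T : ℕ} (ν : W T → ℝ) (p : Sp T) : ℝ := ∑' z : ℕ, ν ((p.1, z), (p.2.1, p.2.2))

open Classical in
/-- `Î(ν) = H(ν | ν₁ ⊗ q)` if the two marginals of `ν` coincide, `+∞` otherwise. -/
def Ihat {T : ℕ} (ν : W T → ℝ) : ℝ≥0∞ :=
  if ∀ w, nu1 ν w = nu2 ν w then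
    ∑' w : W T, ENNReal.ofReal (klF (ν w) (nu1 ν w.1 * qker T w.1 w.2))
  else ⊤

/-- Relative entropy `H(ν | ρ) ∈ [0,∞]` on `(𝕊 × 2ℕ)²`. -/
def DklW {T : ℕ} (ν ρ : W T → ℝ) : ℝ≥0∞ := ∑' w : W T, ENNReal.ofReal (klF (ν w) (ρ w))

/-- `μ̄((α,x),(α',x')) = (∑_γ μ(γ,α,x) / ∑_{γ,z} μ(γ,α,z)) μ(α,α',x')`
(with the convention that the value is `0` when the denominator vanishes). -/
def mubar {T : ℕ} (μ : Sp T → ℝ) (w : W T) : ℝ :=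
  ((∑' γ : ZMod T, μ (γ, w.1.1, w.1.2)) / marg2 μ w.1.1) * μ (w.1.1, w.2.1, w.2.2)

end Copoly

/-!
Write `μ_b = ν₀ · exp G` with `ν₀(α,β,x) = π(α) p_{α,β} K_{α,β}(x)` and
`G = Φ - b x + log v_β - log v_α - log Z`. For `μ ∈ 𝒫` with finite mean, let `ρ_μ` be `μ_b` with
`π` replaced by the first marginal of `μ`. Expanding `H(μ | ν₀)` around `ρ_μ` gives the Gibbs
identity `Q(μ) = b E_μ[x] + log Z + 1 - ∑ₙ K(2n) - H(μ | ρ_μ)`: the `log v` terms cancel because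
the two marginals of `μ` coincide. (The constant `∑ₙ K(2n)` is `1`, but only its independence of
`μ` matters.) With equal means the constant is the same for `μ` and `μ_b`, and `ρ_{μ_b} = μ_b`, so
`Q(μ) ≤ Q(μ_b)`, with equality iff `μ = ρ_μ`. Then the first marginal of `μ` is stationary for the
positive stochastic matrix `A_{α,β} v_β / (Z v_α)`, so it equals `π`, and `μ = μ_b`.
-/

namespace Copoly

open InformationTheory

section RelativeEntropy

lemma klF_eq_mul_klFun {a c : ℝ} (hc : c ≠ 0) : klF a c = c * klFun (a / c) := by
  unfold klF klFun
  field_simp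
  ring

lemma klF_self (a : ℝ) : klF a a = 0 := by
  rcases eq_or_ne a 0 with rfl | ha
  · simp [klF]
  · simp [klF, div_self ha]

lemma klF_nonneg {a c : ℝ} (ha : 0 ≤ a) (hc : 0 ≤ c) (hac : c = 0 → a = 0) :
    0 ≤ klF a c := by
  rcases hc.eq_or_lt with rfl | hc
  · simp [hac rfl, klF]
  · rw [klF_eq_mul_klFun hc.ne']
    exact mul_nonneg hc.le (klFun_nonneg (div_nonneg ha hc.le))

lemma klF_eq_zero_iff {a c : ℝ} (ha : 0 ≤ a) (hc : 0 ≤ c) (hac : c = 0 → a = 0) :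
    klF a c = 0 ↔ a = c := by
  rcases hc.eq_or_lt with rfl | hc
  · simp [hac rfl, klF]
  · rw [klF_eq_mul_klFun hc.ne', mul_eq_zero, klFun_eq_zero_iff (div_nonneg ha hc.le),
      div_eq_one_iff_eq hc.ne']
    simp [hc.ne']

lemma klF_mul_exp {a r : ℝ} (G : ℝ) (ha : 0 ≤ a) (hr : a ≠ 0 → 0 < r) :
    klF a (r * Real.exp G) = klF a r - a * G + (r * Real.exp G - r) := by
  rcases ha.eq_or_lt with rfl | ha
  · simp [klF]
  · have hr := hr ha.ne'
    unfold klF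
    rw [div_mul_eq_div_div, Real.log_div (by positivity) (Real.exp_pos G).ne', Real.log_exp]
    ring

end RelativeEntropy

section RandomWalk

lemma cardOf_eq_natCard {α : Type*} [Fintype α] (P : α → Prop) :
    cardOf P = Nat.card {a // P a} := by
  classical
  rw [cardOf, Nat.card_eq_fintype_card, Fintype.card_subtype]

lemma sum_cardOf_le_card {ι α : Type*} [Fintype α] (s : Finset ι) (P : ι → α → Prop)
    (hP : ∀ i ∈ s, ∀ j ∈ s, i ≠ j → ∀ a, P i a → ¬ P j a) :
    ∑ i ∈ s, cardOf (P i) ≤ Fintype.card α := by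
  classical
  unfold cardOf
  rw [← Finset.card_biUnion fun i hi j hj hij =>
    Finset.disjoint_filter.2 fun a _ => hP i hi j hj hij a]
  exact Finset.card_le_univ _

def IsFirstReturn (y : ℕ → Bool) (x : ℕ) : Prop :=
  0 < x ∧ walk y x = 0 ∧ ∀ z, 0 < z → z < x → walk y z ≠ 0

lemma IsFirstReturn.eq {y : ℕ → Bool} {x x' : ℕ} (hx : IsFirstReturn y x)
    (hx' : IsFirstReturn y x') : x = x' := by
  by_contra hne
  rcases Nat.lt_or_gt_of_ne hne with hlt | hlt
  · exact hx'.2.2 x hx.1 hlt hx.2.1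
  · exact hx.2.2 x' hx'.1 hlt hx'.2.1

lemma walk_congr {y y' : ℕ → Bool} {x : ℕ} (h : ∀ i < x, y i = y' i) :
    walk y x = walk y' x :=
  Finset.sum_congr rfl fun i hi => by rw [h i (Finset.mem_range.mp hi)]

lemma isFirstReturn_congr {y y' : ℕ → Bool} {x : ℕ} (h : ∀ i < x, y i = y' i) :
    IsFirstReturn y x ↔ IsFirstReturn y' x := by
  have hw : ∀ z ≤ x, walk y z = walk y' z := fun z hz =>
    walk_congr fun i hi => h i (lt_of_lt_of_le hi hz)
  unfold IsFirstReturn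
  refine and_congr Iff.rfl (and_congr (by rw [hw x le_rfl]) ?_)
  exact forall_congr' fun z => imp_congr_right fun _ => imp_congr_right fun hz => by
    rw [hw z hz.le]

lemma Kret_eq_cardOf (x : ℕ) :
    Kret x = (1 / 2 : ℝ) ^ x * cardOf (fun y : Fin x → Bool => IsFirstReturn (ext y) x) := by
  unfold Kret IsFirstReturn
  rcases Nat.eq_zero_or_pos x with rfl | hx
  · simp [cardOf]
  · simp [hx.ne', hx]

lemma cardOf_cylinder {m k : ℕ} (P : (ℕ → Bool) → Prop)
    (hP : ∀ y y', (∀ i < m, y i = y' i) → (P y ↔ P y')) :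
    cardOf (fun y : Fin (m + k) → Bool => P (ext y))
      = cardOf (fun y : Fin m → Bool => P (ext y)) * 2 ^ k := by
  have e : {y : Fin (m + k) → Bool // P (ext y)}
      ≃ {z : Fin m → Bool // P (ext z)} × (Fin k → Bool) :=
    ((Fin.appendEquiv m k).symm.subtypeEquiv fun y => hP _ _ fun i hi => by
      simp [ext, hi, show i < m + k by omega]).trans Equiv.prodSubtypeFstEquivSubtypeProd
  rw [cardOf_eq_natCard, cardOf_eq_natCard, Nat.card_congr e, Nat.card_prod]
  simp

lemma cylinder_prob_eq {m M : ℕ} (hmM : m ≤ M) (P : (ℕ → Bool) → Prop)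
    (hP : ∀ y y', (∀ i < m, y i = y' i) → (P y ↔ P y')) :
    (1 / 2 : ℝ) ^ M * cardOf (fun y : Fin M → Bool => P (ext y))
      = (1 / 2 : ℝ) ^ m * cardOf (fun y : Fin m → Bool => P (ext y)) := by
  obtain ⟨k, rfl⟩ := Nat.exists_eq_add_of_le hmM
  have h2 : (1 / 2 : ℝ) ^ k * 2 ^ k = 1 := by rw [← mul_pow]; norm_num
  rw [cardOf_cylinder P hP, pow_add]
  push_cast
  linear_combination ((1 / 2 : ℝ) ^ m * cardOf (fun y : Fin m → Bool => P (ext y))) * h2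

lemma walk_tent (n z : ℕ) :
    walk (fun i => decide (i < n)) z = if z ≤ n then (z : ℤ) else 2 * n - z := by
  induction z with
  | zero => simp [walk]
  | succ k ih =>
    rw [walk, Finset.sum_range_succ, ← walk, ih]
    simp only [step, decide_eq_true_eq]
    split_ifs <;> omega

lemma isFirstReturn_tent {n : ℕ} (hn : 0 < n) :
    IsFirstReturn (fun i => decide (i < n)) (2 * n) := by
  refine ⟨by omega, ?_, fun z hz hzn => ?_⟩ <;> rw [walk_tent] <;> split_ifs <;> omega

lemma Kret_nonneg (x : ℕ) : 0 ≤ Kret x := by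
  rw [Kret_eq_cardOf]
  positivity

lemma Kret_two_mul_pos {n : ℕ} (hn : 0 < n) : 0 < Kret (2 * n) := by
  have : Nonempty {y : Fin (2 * n) → Bool // IsFirstReturn (ext y) (2 * n)} :=
    ⟨⟨fun i => decide (i.1 < n), (isFirstReturn_congr fun i hi => by simp [ext, hi]).2
      (isFirstReturn_tent hn)⟩⟩
  rw [Kret_eq_cardOf, cardOf_eq_natCard]
  have := Nat.card_pos (α := {y : Fin (2 * n) → Bool // IsFirstReturn (ext y) (2 * n)})
  positivity

lemma sum_range_Kret_two_mul_le_one (N : ℕ) : ∑ n ∈ Finset.range N, Kret (2 * n) ≤ 1 := by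
  have hprob : ∀ n ∈ Finset.range N, Kret (2 * n) = (1 / 2 : ℝ) ^ (2 * N) *
      cardOf (fun y : Fin (2 * N) → Bool => IsFirstReturn (ext y) (2 * n)) := fun n hn => by
    rw [Kret_eq_cardOf, cylinder_prob_eq (M := 2 * N) (m := 2 * n) (by simp at hn; omega) _
      fun y y' => isFirstReturn_congr]
  have hcard := sum_cardOf_le_card (Finset.range N)
    (fun n (y : Fin (2 * N) → Bool) => IsFirstReturn (ext y) (2 * n))
    fun i _ j _ hij y hi hj => hij (by have := hi.eq hj; omega)
  rw [Finset.sum_congr rfl hprob, ← Finset.mul_sum]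
  calc (1 / 2 : ℝ) ^ (2 * N) * ∑ n ∈ Finset.range N,
        (cardOf (fun y : Fin (2 * N) → Bool => IsFirstReturn (ext y) (2 * n)) : ℝ)
      ≤ (1 / 2 : ℝ) ^ (2 * N) * 2 ^ (2 * N) := by
        gcongr
        exact_mod_cast hcard.trans_eq (by simp)
    _ = 1 := by rw [← mul_pow]; norm_num

lemma summable_Kret_two_mul : Summable fun n : ℕ => Kret (2 * n) :=
  summable_of_sum_range_le (fun _ => Kret_nonneg _) sum_range_Kret_two_mul_le_one

end RandomWalk

section Kernel

variable {T : ℕ}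

lemma summable_pmat_summand (α β : ZMod T) :
    Summable fun n : ℕ => if (n : ZMod T) = β - α then Kret (2 * n) else 0 :=
  summable_Kret_two_mul.of_nonneg_of_le (fun n => by split_ifs <;> simp [Kret_nonneg])
    fun n => by split_ifs <;> simp [Kret_nonneg]

variable [NeZero T]

lemma exists_pos_natCast_eq (γ : ZMod T) : ∃ n : ℕ, 0 < n ∧ (n : ZMod T) = γ :=
  ⟨γ.val + T, by have := NeZero.pos T; omega, by simp⟩

lemma pmat_pos (α β : ZMod T) : 0 < pmat T α β := by
  obtain ⟨n, hn, hnγ⟩ := exists_pos_natCast_eq (β - α)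
  refine (summable_pmat_summand α β).tsum_pos (fun n => by split_ifs <;> simp [Kret_nonneg]) n ?_
  simpa [hnγ] using Kret_two_mul_pos hn

lemma sum_pmat (α : ZMod T) : ∑ β, pmat T α β = ∑' n : ℕ, Kret (2 * n) := by
  unfold pmat
  rw [← Summable.tsum_finsetSum fun β _ => summable_pmat_summand α β]
  congr 1
  funext n
  simp_rw [eq_sub_iff_add_eq, add_comm _ α]
  simp

lemma Kcond_nonneg (α β : ZMod T) (x : ℕ) : 0 ≤ Kcond T α β x := by
  unfold Kcond
  split_ifs
  exacts [div_nonneg (Kret_nonneg x) (pmat_pos α β).le, le_rfl]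

lemma Kcond_pos_iff {α β : ZMod T} {x : ℕ} :
    0 < Kcond T α β x ↔ x % 2 = 0 ∧ 2 ≤ x ∧ ((x / 2 : ℕ) : ZMod T) = β - α := by
  unfold Kcond
  constructor
  · intro hpos
    split_ifs at hpos with hx
    · refine ⟨hx.1, ?_, hx.2⟩
      by_contra hlt
      obtain rfl : x = 0 := by omega
      simp [Kret] at hpos
    · exact absurd hpos (lt_irrefl 0)
  · rintro ⟨hx2, hx, hxγ⟩
    rw [if_pos ⟨hx2, hxγ⟩]
    have := Kret_two_mul_pos (n := x / 2) (by omega)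
    rw [show 2 * (x / 2) = x by omega] at this
    exact div_pos this (pmat_pos α β)

lemma hasSum_Kcond (α β : ZMod T) : HasSum (Kcond T α β) 1 := by
  have hodd : ∀ x ∉ Set.range (2 * ·), Kcond T α β x = 0 := fun x hx => by
    by_contra hne
    obtain ⟨hx2, -⟩ := Kcond_pos_iff.1 ((Kcond_nonneg α β x).lt_of_ne' hne)
    exact hx ⟨x / 2, by simp only; omega⟩
  rw [← (mul_right_injective₀ two_ne_zero).hasSum_iff hodd]
  have h := ((summable_pmat_summand α β).hasSum.div_const (pmat T α β))
  change HasSum _ (pmat T α β / pmat T α β) at h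
  rw [div_self (pmat_pos α β).ne'] at h
  convert h using 2 with n
  simp [Kcond, Function.comp, ite_div]

end Kernel

section Summation

lemma hasSum_prod_of_fintype_left {α β E : Type*} [Fintype α] [AddCommMonoid E]
    [TopologicalSpace E] [ContinuousAdd E] {f : α × β → E} {g : α → E}
    (hf : ∀ a, HasSum (fun b => f (a, b)) (g a)) : HasSum f (∑ a, g a) := by
  classical
  have hfib : ∀ a, HasSum (fun p : α × β => if p.1 = a then f p else 0) (g a) := fun a => by
    rw [← (Prod.mk_right_injective a).hasSum_iff fun p hp =>
      if_neg fun h => hp ⟨p.2, by simp [← h]⟩]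
    simpa [Function.comp_def] using hf a
  simpa using hasSum_sum fun a (_ : a ∈ Finset.univ) => hfib a

lemma summable_mul_of_abs_le {ι : Type*} {f τ : ι → ℝ} (hτ0 : ∀ i, 0 ≤ τ i) (hτ : Summable τ)
    {C : ℝ} (hf : ∀ i, |f i| ≤ C) : Summable fun i => f i * τ i :=
  Summable.of_norm_bounded (hτ.mul_left C) fun i => by
    rw [Real.norm_eq_abs, abs_mul, abs_of_nonneg (hτ0 i)]
    exact mul_le_mul_of_nonneg_right (hf i) (hτ0 i)

lemma exists_abs_le {ι : Type*} [Fintype ι] (f : ι → ℝ) : ∃ C, ∀ i, |f i| ≤ C :=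
  ⟨∑ j, |f j|, fun i => Finset.single_le_sum (fun j _ => abs_nonneg (f j)) (Finset.mem_univ i)⟩

variable {T : ℕ} [NeZero T]

lemma hasSum_sp {E : Type*} [AddCommMonoid E] [TopologicalSpace E] [ContinuousAdd E]
    {f : Sp T → E} {g : ZMod T → ZMod T → E} (hf : ∀ α β, HasSum (fun x => f (α, β, x)) (g α β)) :
    HasSum f (∑ α, ∑ β, g α β) :=
  hasSum_prod_of_fintype_left fun α => hasSum_prod_of_fintype_left fun β => hf α β

omit [NeZero T] in
lemma hasSum_fiber {τ : Sp T → ℝ} (hτ : Summable τ) (α β : ZMod T) :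
    HasSum (fun x => τ (α, β, x)) (∑' x, τ (α, β, x)) :=
  (hτ.comp_injective ((Prod.mk_right_injective α).comp (Prod.mk_right_injective β))).hasSum

lemma marg1_eq_sum {τ : Sp T → ℝ} (hτ : Summable τ) (α : ZMod T) :
    marg1 τ α = ∑ β, ∑' x, τ (α, β, x) :=
  (hasSum_prod_of_fintype_left (f := fun q : ZMod T × ℕ => τ (α, q.1, q.2))
    fun β => hasSum_fiber hτ α β).tsum_eq

lemma marg2_eq_sum {τ : Sp T → ℝ} (hτ : Summable τ) (β : ZMod T) :
    marg2 τ β = ∑ α, ∑' x, τ (α, β, x) :=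
  (hasSum_prod_of_fintype_left (f := fun q : ZMod T × ℕ => τ (q.1, β, q.2))
    fun α => hasSum_fiber hτ α β).tsum_eq

lemma hasSum_marg1 {τ : Sp T → ℝ} (hτ : Summable τ) : HasSum τ (∑ α, marg1 τ α) := by
  simpa only [marg1_eq_sum hτ] using hasSum_sp fun α β => hasSum_fiber hτ α β

lemma hasSum_mul_marg {τ : Sp T → ℝ} (hτ : Summable τ) (f : ZMod T → ZMod T → ℝ) :
    HasSum (fun p => f p.1 p.2.1 * τ p) (∑ α, ∑ β, f α β * ∑' x, τ (α, β, x)) :=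
  hasSum_sp fun α β => (hasSum_fiber hτ α β).mul_left (f α β)

lemma hasSum_telescope {τ : Sp T → ℝ} (hτ : Summable τ) (hm : ∀ γ, marg1 τ γ = marg2 τ γ)
    (u : ZMod T → ℝ) : HasSum (fun p => (u p.2.1 - u p.1) * τ p) 0 := by
  have hval : ∑ α, ∑ β, (u β - u α) * ∑' x, τ (α, β, x) = 0 := by
    simp_rw [sub_mul, Finset.sum_sub_distrib]
    rw [Finset.sum_comm]
    simp_rw [← Finset.mul_sum, ← marg1_eq_sum hτ, ← marg2_eq_sum hτ, hm, sub_self]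
  simpa only [hval] using hasSum_mul_marg hτ fun α β => u β - u α

lemma sum_marg1_of_memP {μ : Sp T → ℝ} (hμ : memP μ) : ∑ α, marg1 μ α = 1 :=
  (hasSum_marg1 hμ.2.1.summable).unique hμ.2.1

omit [NeZero T] in
lemma marg1_nonneg {τ : Sp T → ℝ} (hτ0 : ∀ p, 0 ≤ τ p) (α : ZMod T) : 0 ≤ marg1 τ α :=
  tsum_nonneg fun _ => hτ0 _

omit [NeZero T] in
lemma le_marg1 {τ : Sp T → ℝ} (hτ0 : ∀ p, 0 ≤ τ p) (hτ : Summable τ) (p : Sp T) :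
    τ p ≤ marg1 τ p.1 :=
  (hτ.comp_injective (Prod.mk_right_injective p.1)).le_tsum p.2 fun _ _ => hτ0 _

omit [NeZero T] in
lemma marg1_pos_of_memP {μ : Sp T → ℝ} (hμ : memP μ) {p : Sp T} (hp : μ p ≠ 0) :
    0 < marg1 μ p.1 :=
  ((hμ.1 p).lt_of_ne' hp).trans_le (le_marg1 hμ.1 hμ.2.1.summable p)

omit [NeZero T] in
lemma two_le_tsum_mul_of_memP {μ : Sp T → ℝ} (hμ : memP μ)
    (hx : Summable fun p : Sp T => (p.2.2 : ℝ) * μ p) : 2 ≤ ∑' p : Sp T, (p.2.2 : ℝ) * μ p := by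
  have hle : ∀ p : Sp T, 2 * μ p ≤ p.2.2 * μ p := fun p => by
    rcases eq_or_ne (μ p) 0 with hp | hp
    · simp [hp]
    · exact mul_le_mul_of_nonneg_right (by exact_mod_cast (hμ.2.2.1 p hp).2.1) (hμ.1 p)
  have := (hμ.2.1.summable.mul_left 2).tsum_le_tsum hle hx
  rwa [tsum_mul_left, hμ.2.1.tsum_eq, mul_one] at this

end Summation

section KernelBounds

variable {T : ℕ} [NeZero T] {ω : ℕ → ℤ} {lam h b : ℝ}

omit [NeZero T] in
lemma abs_PhiM_le (hlam : 0 ≤ lam) (hh : 0 ≤ h) (α β : ZMod T) (x : ℕ) :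
    |PhiM T ω lam h α β x| ≤ Real.log 2 + 2 * lam * |(xiM T ω α β : ℝ)| := by
  set t := -2 * (lam * (xiM T ω α β : ℝ) + lam * h * x)
  set s := 2 * lam * |(xiM T ω α β : ℝ)|
  have hs : 0 ≤ s := by positivity
  have hts : t ≤ s := by
    have := mul_le_mul_of_nonneg_left (neg_le_abs (xiM T ω α β : ℝ)) hlam
    have : 0 ≤ lam * h * x := by positivity
    linarith
  have hlow : Real.log (1 / 2) ≤ PhiM T ω lam h α β x :=
    Real.log_le_log (by norm_num) (by linarith [Real.exp_pos t])
  have hup : PhiM T ω lam h α β x ≤ s :=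
    (Real.log_le_log (by positivity) (by linarith [Real.exp_le_exp.2 hts, Real.one_le_exp hs] :
      (1 + Real.exp t) / 2 ≤ Real.exp s)).trans_eq (Real.log_exp s)
  rw [one_div, Real.log_inv] at hlow
  rw [abs_le]
  constructor <;> linarith [Real.log_pos (by norm_num : (1 : ℝ) < 2)]

lemma exists_abs_PhiM_le (hlam : 0 ≤ lam) (hh : 0 ≤ h) :
    ∃ C, ∀ α β x, |PhiM T ω lam h α β x| ≤ C := by
  obtain ⟨C, hC⟩ := exists_abs_le fun q : ZMod T × ZMod T => (xiM T ω q.1 q.2 : ℝ)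
  exact ⟨Real.log 2 + 2 * lam * C, fun α β x => (abs_PhiM_le hlam hh α β x).trans
    (by gcongr; exact hC (α, β))⟩

lemma exists_exp_PhiM_sub_le (hb : 0 < b) (hlam : 0 ≤ lam) (hh : 0 ≤ h) :
    ∃ C, ∀ α β x, |Real.exp (PhiM T ω lam h α β x - b * x)| ≤ C ∧
      |x * Real.exp (PhiM T ω lam h α β x - b * x)| ≤ C := by
  obtain ⟨C, hC⟩ := exists_abs_PhiM_le (T := T) (ω := ω) hlam hh
  refine ⟨Real.exp C * max 1 b⁻¹, fun α β x => ?_⟩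
  have hx : (0 : ℝ) ≤ x := x.cast_nonneg
  have hΦ : Real.exp (PhiM T ω lam h α β x) ≤ Real.exp C :=
    Real.exp_le_exp.2 (abs_le.1 (hC α β x)).2
  have hdecay : Real.exp (-(b * x)) ≤ 1 := Real.exp_le_one_iff.2 (by nlinarith)
  have hdecay' : x * Real.exp (-(b * x)) ≤ b⁻¹ := by
    rw [Real.exp_neg, ← div_eq_mul_inv, div_le_iff₀ (Real.exp_pos _), inv_mul_eq_div,
      le_div_iff₀ hb]
    nlinarith [Real.add_one_le_exp (b * x)]
  rw [sub_eq_add_neg, Real.exp_add, abs_of_nonneg (by positivity), abs_of_nonneg (by positivity)]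
  constructor
  · gcongr
    exact hdecay.trans (le_max_left _ _)
  · rw [mul_left_comm]
    gcongr
    exact hdecay'.trans (le_max_right _ _)

lemma summable_Amat_summand (hb : 0 < b) (hlam : 0 ≤ lam) (hh : 0 ≤ h) (α β : ZMod T) :
    Summable fun x => Kcond T α β x * Real.exp (PhiM T ω lam h α β x - b * x) := by
  obtain ⟨C, hC⟩ := exists_exp_PhiM_sub_le (T := T) (ω := ω) hb hlam hh
  simpa only [mul_comm] using summable_mul_of_abs_le (Kcond_nonneg α β)
    (hasSum_Kcond α β).summable fun x => (hC α β x).1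

lemma summable_mul_Amat_summand (hb : 0 < b) (hlam : 0 ≤ lam) (hh : 0 ≤ h) (α β : ZMod T) :
    Summable fun x : ℕ => x * (Kcond T α β x * Real.exp (PhiM T ω lam h α β x - b * x)) := by
  obtain ⟨C, hC⟩ := exists_exp_PhiM_sub_le (T := T) (ω := ω) hb hlam hh
  refine (summable_mul_of_abs_le (Kcond_nonneg α β) (hasSum_Kcond α β).summable
    fun x => (hC α β x).2).congr fun x => ?_
  ring

lemma Amat_pos (hb : 0 < b) (hlam : 0 ≤ lam) (hh : 0 ≤ h) (α β : ZMod T) :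
    0 < Amat T ω b lam h α β := by
  obtain ⟨n, hn, hnγ⟩ := exists_pos_natCast_eq (β - α)
  have hK : 0 < Kcond T α β (2 * n) := Kcond_pos_iff.2 ⟨by omega, by omega, by simpa using hnγ⟩
  exact mul_pos (pmat_pos α β) ((summable_Amat_summand hb hlam hh α β).tsum_pos
    (fun x => mul_nonneg (Kcond_nonneg α β x) (Real.exp_pos _).le) (2 * n)
    (mul_pos hK (Real.exp_pos _)))

end KernelBounds

section Stochastic

variable {S : Type*} [Fintype S] {P : S → S → ℝ}

lemma pos_of_stationary (hP : ∀ i j, 0 < P i j) {c : S → ℝ} (hc0 : ∀ i, 0 ≤ c i)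
    (hc1 : ∑ i, c i = 1) (hc : ∀ j, ∑ i, c i * P i j = c j) (j : S) : 0 < c j := by
  obtain ⟨i, -, hi⟩ := Finset.exists_lt_of_sum_lt (f := 0) (g := c) (s := Finset.univ)
    (by simp [hc1])
  rw [← hc j]
  exact Finset.sum_pos' (fun k _ => mul_nonneg (hc0 k) (hP k j).le)
    ⟨i, Finset.mem_univ i, mul_pos hi (hP i j)⟩

lemma stationary_unique (hP : ∀ i j, 0 < P i j) {a c : S → ℝ}
    (hc0 : ∀ i, 0 ≤ c i) (ha1 : ∑ i, a i = 1) (hc1 : ∑ i, c i = 1)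
    (ha : ∀ j, ∑ i, a i * P i j = a j) (hc : ∀ j, ∑ i, c i * P i j = c j) : a = c := by
  have hcpos := pos_of_stationary hP hc0 hc1 hc
  obtain ⟨i₀, -, hmin⟩ := Finset.exists_min_image Finset.univ (fun i => a i / c i)
    (Finset.nonempty_of_sum_ne_zero (hc1.trans_ne one_ne_zero))
  set t := a i₀ / c i₀
  -- `a - t c` is a nonnegative stationary vector vanishing at `i₀`, hence zero
  have hle : ∀ i, 0 ≤ a i - t * c i := fun i => by
    have := (div_le_div_iff₀ (hcpos i₀) (hcpos i)).1 (hmin i (Finset.mem_univ i))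
    rw [sub_nonneg, div_mul_eq_mul_div, div_le_iff₀ (hcpos i₀)]
    linarith
  have hzero : ∑ i, (a i - t * c i) * P i i₀ = 0 := by
    simp_rw [sub_mul, Finset.sum_sub_distrib, mul_assoc, ← Finset.mul_sum, ha, hc]
    rw [div_mul_cancel₀ _ (hcpos i₀).ne', sub_self]
  have hat : ∀ i, a i = t * c i := fun i => by
    have := (Finset.sum_eq_zero_iff_of_nonneg fun k _ => mul_nonneg (hle k) (hP k i₀).le).1
      hzero i (Finset.mem_univ i)
    rcases mul_eq_zero.1 this with h | h
    · linarith
    · exact absurd h (hP i i₀).ne'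
  have ht : t = 1 := by
    simpa [← hat, ha1, hc1] using Finset.mul_sum Finset.univ c t
  funext i
  rw [hat i, ht, one_mul]

end Stochastic

def transMat (T : ℕ) (ω : ℕ → ℤ) (b lam h : ℝ) (v : ZMod T → ℝ) (α β : ZMod T) : ℝ :=
  Amat T ω b lam h α β * v β / (Zeig T ω b lam h * v α)

def baseMeasure (T : ℕ) (w : ZMod T → ℝ) (p : Sp T) : ℝ :=
  w p.1 * pmat T p.1 p.2.1 * Kcond T p.1 p.2.1 p.2.2

def logTilt (T : ℕ) (ω : ℕ → ℤ) (b lam h : ℝ) (v : ZMod T → ℝ) (p : Sp T) : ℝ :=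
  PhiM T ω lam h p.1 p.2.1 p.2.2 - b * p.2.2 + (Real.log (v p.2.1) - Real.log (v p.1))
    - Real.log (Zeig T ω b lam h)

section BaseMeasure

variable {T : ℕ} [NeZero T]

lemma hasSum_baseMeasure (w : ZMod T → ℝ) :
    HasSum (baseMeasure T w) ((∑ α, w α) * ∑' n : ℕ, Kret (2 * n)) := by
  have h := hasSum_sp (f := baseMeasure T w) fun α β =>
    ((hasSum_Kcond α β).mul_left (w α * pmat T α β)).congr_fun fun x => rfl
  simp_rw [mul_one, ← Finset.mul_sum, sum_pmat] at h
  rwa [Finset.sum_mul]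

lemma baseMeasure_marg1_pos {μ : Sp T → ℝ} (hμ : memP μ) {p : Sp T}
    (hp : μ p ≠ 0) : 0 < baseMeasure T (marg1 μ) p :=
  mul_pos (mul_pos (marg1_pos_of_memP hμ hp) (pmat_pos _ _)) (Kcond_pos_iff.2 (hμ.2.2.1 p hp))

lemma baseMeasure_nonneg {w : ZMod T → ℝ} (hw : ∀ α, 0 ≤ w α) (p : Sp T) :
    0 ≤ baseMeasure T w p :=
  mul_nonneg (mul_nonneg (hw _) (pmat_pos _ _).le) (Kcond_nonneg _ _ _)

end BaseMeasure

section TiltedMeasure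

variable {T : ℕ} [NeZero T] {ω : ℕ → ℤ} {lam h b : ℝ} {v : ZMod T → ℝ}
  (hb : 0 < b) (hlam : 0 ≤ lam) (hh : 0 ≤ h) (hv : ∀ i, 0 < v i)
  (heig : ∀ i, ∑' j, Amat T ω b lam h i j * v j = Zeig T ω b lam h * v i)
include hb hlam hh hv heig

lemma Zeig_pos : 0 < Zeig T ω b lam h := by
  have h0 := heig 0
  rw [tsum_fintype] at h0
  have : 0 < Zeig T ω b lam h * v 0 := h0 ▸ Finset.sum_pos
    (fun j _ => mul_pos (Amat_pos hb hlam hh 0 j) (hv j)) Finset.univ_nonempty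
  exact pos_of_mul_pos_left this (hv 0).le

lemma transMat_pos (α β : ZMod T) : 0 < transMat T ω b lam h v α β :=
  div_pos (mul_pos (Amat_pos hb hlam hh α β) (hv β))
    (mul_pos (Zeig_pos hb hlam hh hv heig) (hv α))

lemma sum_transMat (α : ZMod T) : ∑ β, transMat T ω b lam h v α β = 1 := by
  have hrow := heig α
  rw [tsum_fintype] at hrow
  simp only [transMat]
  rw [← Finset.sum_div, hrow, div_self (mul_pos (Zeig_pos hb hlam hh hv heig) (hv α)).ne']

omit [NeZero T] hb hlam hh heig in
lemma muB_eq_baseMeasure_mul_exp (hZ : 0 < Zeig T ω b lam h) (w : ZMod T → ℝ) (p : Sp T) :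
    muB T ω b lam h w v p = baseMeasure T w p * Real.exp (logTilt T ω b lam h v p) := by
  simp only [muB, baseMeasure, logTilt, Real.exp_sub, Real.exp_add, Real.exp_log (hv p.1),
    Real.exp_log (hv p.2.1), Real.exp_log hZ]
  have := hv p.1
  field_simp

omit hv heig in
lemma hasSum_fiber_muB (w : ZMod T → ℝ) (α β : ZMod T) :
    HasSum (fun x => muB T ω b lam h w v (α, β, x)) (w α * transMat T ω b lam h v α β) := by
  have hval : w α * transMat T ω b lam h v α β = w α * pmat T α β * v β /
      (Zeig T ω b lam h * v α) * ∑' x, Kcond T α β x * Real.exp (PhiM T ω lam h α β x - b * x) := by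
    simp only [transMat, Amat]
    ring
  rw [hval]
  refine ((summable_Amat_summand hb hlam hh α β).hasSum.mul_left _).congr_fun fun x => ?_
  simp only [muB]
  ring

lemma hasSum_muB (w : ZMod T → ℝ) : HasSum (muB T ω b lam h w v) (∑ α, w α) := by
  convert hasSum_sp (hasSum_fiber_muB hb hlam hh w) using 2 with α
  rw [← Finset.mul_sum, sum_transMat hb hlam hh hv heig, mul_one]

lemma marg1_muB (w : ZMod T → ℝ) : marg1 (muB T ω b lam h w v) = w := by
  funext α
  rw [marg1_eq_sum (hasSum_muB hb hlam hh hv heig w).summable,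
    Finset.sum_congr rfl fun β _ => (hasSum_fiber_muB hb hlam hh w α β).tsum_eq,
    ← Finset.mul_sum, sum_transMat hb hlam hh hv heig, mul_one]

lemma marg2_muB (w : ZMod T → ℝ) (β : ZMod T) :
    marg2 (muB T ω b lam h w v) β = ∑ α, w α * transMat T ω b lam h v α β := by
  rw [marg2_eq_sum (hasSum_muB hb hlam hh hv heig w).summable]
  exact Finset.sum_congr rfl fun α _ => (hasSum_fiber_muB hb hlam hh w α β).tsum_eq

omit hv heig in
lemma summable_mul_muB (w : ZMod T → ℝ) :
    Summable fun p : Sp T => (p.2.2 : ℝ) * muB T ω b lam h w v p := by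
  refine (hasSum_sp (f := fun p : Sp T => (p.2.2 : ℝ) * muB T ω b lam h w v p) fun α β =>
    (((summable_mul_Amat_summand (ω := ω) hb hlam hh α β).mul_left
      (w α * pmat T α β * v β / (Zeig T ω b lam h * v α))).congr fun x => ?_).hasSum).summable
  simp only [muB]
  ring

omit hb hlam hh heig in
lemma muB_nonneg (hZ : 0 < Zeig T ω b lam h) {w : ZMod T → ℝ} (hw : ∀ α, 0 ≤ w α) (p : Sp T) :
    0 ≤ muB T ω b lam h w v p := by
  rw [muB_eq_baseMeasure_mul_exp hv hZ]
  exact mul_nonneg (baseMeasure_nonneg hw p) (Real.exp_pos _).le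

omit hb hlam hh heig in
lemma muB_marg1_pos (hZ : 0 < Zeig T ω b lam h) {μ : Sp T → ℝ} (hμ : memP μ) {p : Sp T}
    (hp : μ p ≠ 0) : 0 < muB T ω b lam h (marg1 μ) v p := by
  rw [muB_eq_baseMeasure_mul_exp hv hZ]
  exact mul_pos (baseMeasure_marg1_pos hμ hp) (Real.exp_pos _)

end TiltedMeasure

section Entropy

lemma Dkl_self {T : ℕ} (μ : Sp T → ℝ) : Dkl μ μ = 0 := by
  simp [Dkl, klF_self]

lemma Dkl_eq_zero_iff {T : ℕ} {μ ρ : Sp T → ℝ} (hμ : ∀ p, 0 ≤ μ p) (hρ : ∀ p, 0 ≤ ρ p)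
    (hρμ : ∀ p, ρ p = 0 → μ p = 0) : Dkl μ ρ = 0 ↔ μ = ρ := by
  simp only [Dkl, ENNReal.tsum_eq_zero, ENNReal.ofReal_eq_zero, funext_iff]
  exact forall_congr' fun p => by
    rw [← klF_eq_zero_iff (hμ p) (hρ p) (hρμ p), le_iff_eq_or_lt,
      or_iff_left (klF_nonneg (hμ p) (hρ p) (hρμ p)).not_gt]

lemma tsum_ofReal_eq_top {ι : Type*} {f : ι → ℝ} (hf : ∀ i, 0 ≤ f i) (hs : ¬ Summable f) :
    ∑' i, ENNReal.ofReal (f i) = ⊤ := by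
  by_contra hne
  exact hs ((ENNReal.summable_toReal hne).congr fun i => ENNReal.toReal_ofReal (hf i))

lemma coe_sub_tsum_ofReal_add {ι : Type*} (a : ℝ) {f g : ι → ℝ} (hf : ∀ i, 0 ≤ f i)
    (hfg : ∀ i, 0 ≤ f i + g i) (hg : Summable g) :
    (a : EReal) - (∑' i, ENNReal.ofReal (f i + g i) : ℝ≥0∞)
      = ((a - ∑' i, g i : ℝ) : EReal) - (∑' i, ENNReal.ofReal (f i) : ℝ≥0∞) := by
  by_cases hs : Summable f
  · rw [← ENNReal.ofReal_tsum_of_nonneg hfg (hs.add hg), ← ENNReal.ofReal_tsum_of_nonneg hf hs,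
      EReal.coe_ennreal_ofReal, EReal.coe_ennreal_ofReal, max_eq_left (tsum_nonneg hfg),
      max_eq_left (tsum_nonneg hf), ← EReal.coe_sub, ← EReal.coe_sub, hs.tsum_add hg]
    ring_nf
  · rw [tsum_ofReal_eq_top hfg fun h => hs (by simpa using h.sub hg), tsum_ofReal_eq_top hf hs]
    simp [EReal.sub_top]

lemma coe_sub_coe_ennreal_eq_self_iff (c : ℝ) (D : ℝ≥0∞) : (c : EReal) - D = c ↔ D = 0 := by
  induction D using ENNReal.recTopCoe with
  | top => simp [EReal.sub_top]
  | coe r =>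
    rw [show ((r : ℝ≥0∞) : EReal) = ((r : ℝ) : EReal) from rfl, ← EReal.coe_sub,
      EReal.coe_eq_coe_iff]
    simp

end Entropy

section Variational

variable {T : ℕ} [NeZero T] {ω : ℕ → ℤ} {lam h b : ℝ} {v : ZMod T → ℝ}
  (hb : 0 < b) (hlam : 0 ≤ lam) (hh : 0 ≤ h) (hv : ∀ i, 0 < v i)
  (heig : ∀ i, ∑' j, Amat T ω b lam h i j * v j = Zeig T ω b lam h * v i)
include hlam hh

lemma hasSum_mul_logTilt {μ : Sp T → ℝ} (hμ : memP μ)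
    (hx : Summable fun p : Sp T => (p.2.2 : ℝ) * μ p) :
    HasSum (fun p => μ p * logTilt T ω b lam h v p)
      ((∑' p : Sp T, PhiM T ω lam h p.1 p.2.1 p.2.2 * μ p) - b * ∑' p : Sp T, (p.2.2 : ℝ) * μ p
        - Real.log (Zeig T ω b lam h)) := by
  obtain ⟨C, hC⟩ := exists_abs_PhiM_le (T := T) (ω := ω) hlam hh
  have hΦ := summable_mul_of_abs_le hμ.1 hμ.2.1.summable fun p => hC p.1 p.2.1 p.2.2
  have h := ((hΦ.hasSum.sub (hx.hasSum.mul_left b)).add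
    (hasSum_telescope hμ.2.1.summable hμ.2.2.2 fun α => Real.log (v α))).sub
    (hμ.2.1.mul_left (Real.log (Zeig T ω b lam h)))
  rw [add_zero, mul_one] at h
  exact h.congr_fun fun p => by
    simp only [logTilt]
    ring

include hb hv heig

theorem Qfun_eq_sub_Dkl {μ : Sp T → ℝ} (hμ : memP μ)
    (hx : Summable fun p : Sp T => (p.2.2 : ℝ) * μ p) :
    Qfun T ω lam h μ = ((b * ∑' p : Sp T, (p.2.2 : ℝ) * μ p + Real.log (Zeig T ω b lam h) + 1
      - ∑' n : ℕ, Kret (2 * n) : ℝ) : EReal) - Dkl μ (muB T ω b lam h (marg1 μ) v) := by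
  have hZ := Zeig_pos hb hlam hh hv heig
  set ρ := muB T ω b lam h (marg1 μ) v
  set ν₀ := baseMeasure T (marg1 μ)
  set G := logTilt T ω b lam h v
  have hν₀ : ∀ p, μ p ≠ 0 → 0 < ν₀ p := fun p => baseMeasure_marg1_pos hμ
  have hν₀0 : ∀ p, 0 ≤ ν₀ p := baseMeasure_nonneg (marg1_nonneg hμ.1)
  have hρ : ∀ p, ρ p = ν₀ p * Real.exp (G p) := muB_eq_baseMeasure_mul_exp hv hZ _
  have hρμ : ∀ p, ρ p = 0 → μ p = 0 := fun p h0 =>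
    by_contra fun hp => (muB_marg1_pos hv hZ hμ hp).ne' h0
  have hsplit : ∀ p, klF (μ p) (ν₀ p) = klF (μ p) (ρ p) + (μ p * G p - ρ p + ν₀ p) := fun p => by
    rw [hρ, klF_mul_exp _ (hμ.1 p) (hν₀ p)]
    ring
  have hrest := ((hasSum_mul_logTilt (ω := ω) (v := v) (b := b) hlam hh hμ hx).sub
    (hasSum_muB hb hlam hh hv heig (marg1 μ))).add (hasSum_baseMeasure (marg1 μ))
  rw [sum_marg1_of_memP hμ, one_mul] at hrest
  have hI : Ifun T μ = ∑' p, ENNReal.ofReal (klF (μ p) (ρ p) + (μ p * G p - ρ p + ν₀ p)) := by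
    simp_rw [← hsplit]
    rfl
  have hρ0 : ∀ p, 0 ≤ ρ p := muB_nonneg hv hZ (marg1_nonneg hμ.1)
  rw [Qfun, hI, coe_sub_tsum_ofReal_add _ (fun p => klF_nonneg (hμ.1 p) (hρ0 p) (hρμ p))
    (fun p => hsplit p ▸ klF_nonneg (hμ.1 p) (hν₀0 p) fun h0 => by_contra fun hp =>
      (hν₀ p hp).ne' h0) hrest.summable, hrest.tsum_eq]
  congr 2
  ring

end Variational

section Optimality

variable {T : ℕ} [NeZero T] {ω : ℕ → ℤ} {lam h b : ℝ} {π v : ZMod T → ℝ}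
  (hb : 0 < b) (hlam : 0 ≤ lam) (hh : 0 ≤ h) (hpf : IsPF T ω b lam h π v)
include hb hlam hh hpf

lemma memP_muB : memP (muB T ω b lam h π v) := by
  obtain ⟨hv, heig, hπ0, hπ1, hstat⟩ := hpf
  rw [tsum_fintype] at hπ1
  refine ⟨muB_nonneg hv (Zeig_pos hb hlam hh hv heig) hπ0,
    hπ1 ▸ hasSum_muB hb hlam hh hv heig π, fun p hp => Kcond_pos_iff.1 ?_, fun γ => ?_⟩
  · exact (Kcond_nonneg _ _ _).lt_of_ne' fun hK => hp (by simp [muB, hK])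
  · rw [marg1_muB hb hlam hh hv heig, marg2_muB hb hlam hh hv heig, ← hstat γ, tsum_fintype]
    rfl

lemma Dkl_muB_marg1_eq_zero_iff {μ : Sp T → ℝ} (hμ : memP μ) :
    Dkl μ (muB T ω b lam h (marg1 μ) v) = 0 ↔ μ = muB T ω b lam h π v := by
  obtain ⟨hv, heig, hπ0, hπ1, hstat⟩ := hpf
  have hZ := Zeig_pos hb hlam hh hv heig
  constructor
  · intro h0
    have hμρ : μ = muB T ω b lam h (marg1 μ) v :=
      (Dkl_eq_zero_iff hμ.1 (muB_nonneg hv hZ (marg1_nonneg hμ.1))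
        fun p h0 => by_contra fun hp => (muB_marg1_pos hv hZ hμ hp).ne' h0).1 h0
    have hμstat : ∀ j, ∑ i, marg1 μ i * transMat T ω b lam h v i j = marg1 μ j := fun j => by
      rw [← marg2_muB hb hlam hh hv heig, ← hμρ, hμ.2.2.2]
    have hπstat : ∀ j, ∑ i, π i * transMat T ω b lam h v i j = π j := fun j => by
      rw [← hstat j, tsum_fintype]
      rfl
    rw [tsum_fintype] at hπ1
    have hmarg := stationary_unique (transMat_pos hb hlam hh hv heig) hπ0
      (sum_marg1_of_memP hμ) hπ1 hμstat hπstat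
    rwa [hmarg] at hμρ
  · rintro rfl
    rw [marg1_muB hb hlam hh hv heig]
    exact Dkl_self _

end Optimality

/-- Lemma 2.2(ii): if `μ ∈ 𝒫` has the same mean excursion length as
`μ_b^{λ,h}`, then `Q(μ) ≤ Q(μ_b^{λ,h})`, with equality iff `μ = μ_b^{λ,h}`. -/
theorem stmt9 (ω : ℕ → ℤ) (hω : memT ω) (lam h : ℝ) (hlam : 0 ≤ lam) (hh : 0 ≤ h)
    (b : ℝ) (hb : 0 < b) (π v : ZMod (Tper ω) → ℝ)
    (hpf : IsPF (Tper ω) ω b lam h π v)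
    (μ : Sp (Tper ω) → ℝ) (hμ : memP μ)
    (hmean : (∑' p : Sp (Tper ω), (p.2.2 : ℝ) * μ p) =
      ∑' p : Sp (Tper ω), (p.2.2 : ℝ) * muB (Tper ω) ω b lam h π v p) :
    Qfun (Tper ω) ω lam h μ ≤ Qfun (Tper ω) ω lam h (muB (Tper ω) ω b lam h π v) ∧
      (Qfun (Tper ω) ω lam h μ = Qfun (Tper ω) ω lam h (muB (Tper ω) ω b lam h π v) ↔
        μ = muB (Tper ω) ω b lam h π v) := by
  obtain ⟨-, ⟨T₀, hT₀⟩, -⟩ := hω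
  have : NeZero (Tper ω) := ⟨(Nat.sInf_mem (s := {T | IsPeriod ω T}) ⟨T₀, hT₀⟩).1.ne'⟩
  have hν := memP_muB hb hlam hh hpf
  have hνx := summable_mul_muB (ω := ω) (v := v) hb hlam hh π
  have hμx : Summable fun p : Sp (Tper ω) => (p.2.2 : ℝ) * μ p := by
    by_contra hns
    rw [tsum_eq_zero_of_not_summable hns] at hmean
    linarith [two_le_tsum_mul_of_memP hν hνx]
  have hQν := Qfun_eq_sub_Dkl hb hlam hh hpf.1 hpf.2.1 hν hνx
  rw [marg1_muB hb hlam hh hpf.1 hpf.2.1, Dkl_self, EReal.coe_ennreal_zero, sub_zero] at hQν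
  rw [Qfun_eq_sub_Dkl hb hlam hh hpf.1 hpf.2.1 hμ hμx, hmean, hQν,
    coe_sub_coe_ennreal_eq_self_iff, Dkl_muB_marg1_eq_zero_iff hb hlam hh hpf hμ]
  exact ⟨EReal.sub_le_of_le_add (le_add_of_nonneg_right (EReal.coe_ennreal_nonneg _)), Iff.rfl⟩

end Copoly
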